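/- Let N, n, m be positive reals with m ≤ n ≤ N, 1 < m < N, let 0 ≤ q ≤ 1, α ∈ [0,1], and let q' = 1 − (1−qα)^n for a positive integer n. Then (N−m)·(q' − qα) + (n−m)·(1 − q') ≥ 0. -/

import Mathlib

theorem le_one_sub_one_sub_pow {R : Type*} [CommRing R] [LinearOrder R] [IsStrictOrderedRing R]
    {x : R} (hx0 : 0 ≤ x) (hx1 : x ≤ 1) {n : ℕ} (hn : n ≠ 0) :
    x ≤ 1 - (1 - x) ^ n := by
  have hpow : (1 - x) ^ n ≤ 1 - x := pow_le_of_le_one (sub_nonneg.mpr hx1) (by linarith) hn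
  linarith

theorem lower_bound_case3_general (N m q α : ℝ) (n : ℕ)
    (hmn : m ≤ (n : ℝ))
    (hmN : m < N)
    (hq0 : 0 ≤ q) (hq1 : q ≤ 1)
    (hα0 : 0 ≤ α) (hα1 : α ≤ 1) (hn : 0 < n) :
    0 ≤ (N - m) * ((1 - (1 - q * α) ^ n) - q * α) +
        ((n : ℝ) - m) * (1 - (1 - (1 - q * α) ^ n)) := by
  have hx0 : 0 ≤ q * α := mul_nonneg hq0 hα0
  have hx1 : q * α ≤ 1 := mul_le_one₀ hq1 hα0 hα1
  have hgain : q * α ≤ 1 - (1 - q * α) ^ n := le_one_sub_one_sub_pow hx0 hx1 hn.ne'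
  have hmiss : 0 ≤ (1 - q * α) ^ n := pow_nonneg (sub_nonneg.mpr hx1) n
  refine add_nonneg (mul_nonneg ?_ ?_) (mul_nonneg ?_ ?_) <;> linarith

theorem lower_bound_case3 (N m q α : ℝ) (n : ℕ)
    (hmn : m ≤ (n : ℝ)) (hnN : (n : ℝ) ≤ N)
    (hm1 : 1 < m) (hmN : m < N)
    (hq0 : 0 ≤ q) (hq1 : q ≤ 1)
    (hα0 : 0 ≤ α) (hα1 : α ≤ 1) (hn : 0 < n) :
    0 ≤ (N - m) * ((1 - (1 - q * α) ^ n) - q * α) +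
        ((n : ℝ) - m) * (1 - (1 - (1 - q * α) ^ n)) :=
  lower_bound_case3_general N m q α n hmn hmN hq0 hq1 hα0 hα1 hn
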